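/- arXiv:0811.3947 — 2 statements merged into one kernel-verified Lean document; each statement's English description precedes it below -/
import Mathlib

section
/- Let X₁ = ∂x + p∂u − C∂p + (B/2)∂q and X₂ = ∂y + q∂u + (B/2)∂p − A∂q on ℝ⁵ with coordinates (x,y,u,p,q), where A,B,C are smooth functions. Then [X₁,X₂] = M₁∂q + M₂∂p where M₁ = −X₁(A) − (1/2)X₂(B) and M₂ = (1/2)X₁(B) + X₂(C). -/
/-- Directional derivative of a function along a vector field on ℝ⁵. -/
noncomputable def dirDeriv (X : (Fin 5 → ℝ) → (Fin 5 → ℝ)) (f : (Fin 5 → ℝ) → ℝ)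
    (m : Fin 5 → ℝ) : ℝ := fderiv ℝ f m (X m)

/-- Lie bracket of vector fields on ℝ⁵ in coordinates. -/
noncomputable def lieBracket5 (X Y : (Fin 5 → ℝ) → (Fin 5 → ℝ)) (m : Fin 5 → ℝ) :
    Fin 5 → ℝ :=
  fun i => dirDeriv X (fun n => Y n i) m - dirDeriv Y (fun n => X n i) m

lemma dd_const (X : (Fin 5 → ℝ) → (Fin 5 → ℝ)) (c : ℝ) (m : Fin 5 → ℝ) :
    dirDeriv X (fun _ => c) m = 0 := by
  simp [dirDeriv]

lemma dd_proj (X : (Fin 5 → ℝ) → (Fin 5 → ℝ)) (i : Fin 5) (m : Fin 5 → ℝ) :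
    dirDeriv X (fun n => n i) m = X m i := by
  have h : fderiv ℝ (fun n : Fin 5 → ℝ => n i) m = ContinuousLinearMap.proj i :=
    (ContinuousLinearMap.proj (R := ℝ) (φ := fun _ : Fin 5 => ℝ) i).fderiv
  simp [dirDeriv, h]

lemma dd_half (X : (Fin 5 → ℝ) → (Fin 5 → ℝ)) (f : (Fin 5 → ℝ) → ℝ) (m : Fin 5 → ℝ)
    (hf : DifferentiableAt ℝ f m) :
    dirDeriv X (fun n => f n / 2) m = dirDeriv X f m / 2 := by
  have : (fun n => f n / 2) = fun n => (2:ℝ)⁻¹ * f n := by funext n; ring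
  rw [dirDeriv, dirDeriv, this, fderiv_const_mul hf]
  simp; ring

lemma dd_neg (X : (Fin 5 → ℝ) → (Fin 5 → ℝ)) (f : (Fin 5 → ℝ) → ℝ) (m : Fin 5 → ℝ) :
    dirDeriv X (fun n => -f n) m = -dirDeriv X f m := by
  simp [dirDeriv, fderiv_neg]

/-- [X₁,X₂] = M₁∂q + M₂∂p with M₁ = −X₁(A) − (1/2)X₂(B), M₂ = (1/2)X₁(B) + X₂(C),
for X₁ = ∂x + p∂u − C∂p + (B/2)∂q, X₂ = ∂y + q∂u + (B/2)∂p − A∂q.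
Coordinates: (x,y,u,p,q) = (m 0, m 1, m 2, m 3, m 4). -/
theorem bracket_formula_nonquasilinear (A B C : (Fin 5 → ℝ) → ℝ)
    (hA : ContDiff ℝ (⊤ : ℕ∞) A) (hB : ContDiff ℝ (⊤ : ℕ∞) B) (hC : ContDiff ℝ (⊤ : ℕ∞) C) :
    ∀ m : Fin 5 → ℝ,
      lieBracket5 (fun n => ![1, 0, n 3, -C n, B n / 2])
          (fun n => ![0, 1, n 4, B n / 2, -A n]) m
        = ![0, 0, 0,
            (1 / 2) * dirDeriv (fun n => ![1, 0, n 3, -C n, B n / 2]) B m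
              + dirDeriv (fun n => ![0, 1, n 4, B n / 2, -A n]) C m,
            -dirDeriv (fun n => ![1, 0, n 3, -C n, B n / 2]) A m
              - (1 / 2) * dirDeriv (fun n => ![0, 1, n 4, B n / 2, -A n]) B m] := by
  intro m
  funext i
  fin_cases i <;>
    simp [lieBracket5, dd_const, dd_proj, dd_neg,
      dd_half _ _ _ (hB.differentiable (by simp) m)] <;> ring
end

section
/- For the quasilinear PMA with A = 1: setting X₁ = ∂x + p∂u + (B/2)(∂y + q∂u) − D∂p and X₂ = (B/2)∂p − ∂q on ℝ⁵ with coordinates (x,y,u,p,q), one has [X₁,X₂] = M₁(∂y + q∂u) + M₂∂p with M₁ = −(1/2)X₂(B) and M₂ = (1/2)X₁(B) + X₂(D). -/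
/-- For the quasilinear PMA with A = 1:
X₁ = ∂x + p∂u + (B/2)(∂y + q∂u) − D∂p, X₂ = (B/2)∂p − ∂q, one has
[X₁,X₂] = M₁(∂y + q∂u) + M₂∂p with M₁ = −(1/2)X₂(B), M₂ = (1/2)X₁(B) + X₂(D).
Coordinates: (x,y,u,p,q) = (m 0, m 1, m 2, m 3, m 4). -/
theorem bracket_formula_quasilinear (B D : (Fin 5 → ℝ) → ℝ)
    (hB : ContDiff ℝ (⊤ : ℕ∞) B) (hD : ContDiff ℝ (⊤ : ℕ∞) D) :
    ∀ m : Fin 5 → ℝ,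
      lieBracket5
          (fun n => ![1, B n / 2, n 3 + B n / 2 * n 4, -D n, 0])
          (fun n => ![0, 0, 0, B n / 2, -1]) m
        = ![0,
            -(1 / 2) * dirDeriv (fun n => ![0, 0, 0, B n / 2, -1]) B m,
            (-(1 / 2) * dirDeriv (fun n => ![0, 0, 0, B n / 2, -1]) B m) * m 4,
            (1 / 2) * dirDeriv (fun n => ![1, B n / 2, n 3 + B n / 2 * n 4, -D n, 0]) B m
              + dirDeriv (fun n => ![0, 0, 0, B n / 2, -1]) D m,
            0] := by
  intro m
  have hBm : DifferentiableAt ℝ B m := (hB.differentiable (by simp)) m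
  have hDm : DifferentiableAt ℝ D m := (hD.differentiable (by simp)) m
  have hB' : HasFDerivAt B (fderiv ℝ B m) m := hBm.hasFDerivAt
  have hD' : HasFDerivAt D (fderiv ℝ D m) m := hDm.hasFDerivAt
  have hp4 : HasFDerivAt (fun n : Fin 5 → ℝ => n 4) ((ContinuousLinearMap.proj (4 : Fin 5) : (Fin 5 → ℝ) →L[ℝ] ℝ)) m :=
    (ContinuousLinearMap.proj (R := ℝ) (φ := fun _ : Fin 5 => ℝ) (4 : Fin 5)).hasFDerivAt
  have hp3 : HasFDerivAt (fun n : Fin 5 → ℝ => n 3) ((ContinuousLinearMap.proj (3 : Fin 5) : (Fin 5 → ℝ) →L[ℝ] ℝ)) m :=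
    (ContinuousLinearMap.proj (R := ℝ) (φ := fun _ : Fin 5 => ℝ) (3 : Fin 5)).hasFDerivAt
  have h1 : HasFDerivAt (fun n => B n / 2) ((2⁻¹ : ℝ) • fderiv ℝ B m) m := by
    simpa [div_eq_mul_inv] using hB'.mul_const (2⁻¹ : ℝ)
  have h2 : HasFDerivAt (fun n : Fin 5 → ℝ => n 3 + B n / 2 * n 4)
      ((ContinuousLinearMap.proj (3 : Fin 5) : (Fin 5 → ℝ) →L[ℝ] ℝ) + ((B m / 2) • (ContinuousLinearMap.proj (4 : Fin 5) : (Fin 5 → ℝ) →L[ℝ] ℝ) + m 4 • ((2⁻¹ : ℝ) • fderiv ℝ B m))) m :=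
    hp3.add (h1.mul hp4)
  have h3 : HasFDerivAt (fun n : Fin 5 → ℝ => -D n) (-(fderiv ℝ D m)) m := hD'.neg
  funext i
  fin_cases i <;>
    simp [lieBracket5, dirDeriv, h1.fderiv, h2.fderiv, h3.fderiv, fderiv_const] <;>
    ring
end
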